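/- Let n ∈ ℕ and let f, g be real-valued functions on ℝ, each n times differentiable. Then for every integer p with 0 ≤ p ≤ n, Σ_{k=0}^{n} (-1)^k · C(n,k) · (g^k)^{(p)} · (f · g^{n-k})^{(n-p)} = (-1)^p · n! · f · (g')^n, where C(n,k) is the binomial coefficient and h^{(m)} denotes the m-th derivative of h. -/

import Mathlib

/-!
Both sides equal `∂ₛᵖ ∂ₜⁿ⁻ᵖ [f(t) (g(t) - g(s))ⁿ]` at `s = t = x`, the left one through the binomial
expansion of `(g(t) - g(s))ⁿ`. Since `g(t) - g(s)` is unchanged when `g` is replaced by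
`u = g - g(x)`, the expansion may be taken in powers of `u` instead. As `u(x) = 0`,
`∂ᵐ(h uʳ)(x)` vanishes for `r > m` and equals `m! h(x) u'(x)ᵐ` for `r = m`, so in the expansion in
powers of `u` only the term `u(s)ᵖ u(t)ⁿ⁻ᵖ` survives.

The two one-variable derivatives are encoded as linear functionals on `𝕜[X]` (evaluated at
polynomials in `g`), and the two-variable expansion as an identity in `A ⊗[R] A`.
-/

open Finset TensorProduct Polynomial

section TensorSquare

variable {R A : Type*} [CommRing R] [CommRing A] [Algebra R A]

theorem one_tmul_sub_tmul_one_pow (u v : A) (n : ℕ) :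
    ((1 : A) ⊗ₜ[R] v - u ⊗ₜ[R] (1 : A)) ^ n =
      ∑ k ∈ range (n + 1), ((-1 : R) ^ k * n.choose k) • ((u ^ k) ⊗ₜ[R] (v ^ (n - k))) := by
  rw [sub_eq_neg_add, add_pow]
  refine sum_congr rfl fun k _ => ?_
  have h : (u ^ k) ⊗ₜ[R] (v ^ (n - k)) = (u ⊗ₜ[R] (1 : A)) ^ k * ((1 : A) ⊗ₜ[R] v) ^ (n - k) := by
    rw [Algebra.TensorProduct.tmul_pow, Algebra.TensorProduct.tmul_pow, one_pow, one_pow,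
      Algebra.TensorProduct.tmul_mul_tmul, one_mul, mul_one]
  rw [Algebra.smul_def, h, map_mul, map_pow, map_neg, map_one, map_natCast, neg_pow]
  ring

theorem lift_mul_one_tmul_sub_tmul_one_pow (L M : A →ₗ[R] R) (u v : A) (n : ℕ) :
    lift ((LinearMap.mul R R).compl₁₂ L M) (((1 : A) ⊗ₜ[R] v - u ⊗ₜ[R] (1 : A)) ^ n) =
      ∑ k ∈ range (n + 1), (-1 : R) ^ k * n.choose k * L (u ^ k) * M (v ^ (n - k)) := by
  simp [one_tmul_sub_tmul_one_pow, mul_assoc]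

theorem sum_neg_one_pow_choose_mul_map_pow_mul_map_pow_sub_algebraMap
    (L M : A →ₗ[R] R) (x y : A) (c : R) (n : ℕ) :
    ∑ k ∈ range (n + 1), (-1 : R) ^ k * n.choose k * L (x ^ k) * M (y ^ (n - k)) =
      ∑ k ∈ range (n + 1), (-1 : R) ^ k * n.choose k * L ((x - algebraMap R A c) ^ k) *
        M ((y - algebraMap R A c) ^ (n - k)) := by
  have h : (1 : A) ⊗ₜ[R] y - x ⊗ₜ[R] (1 : A) =
      (1 : A) ⊗ₜ[R] (y - algebraMap R A c) - (x - algebraMap R A c) ⊗ₜ[R] (1 : A) := by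
    rw [tmul_sub, sub_tmul, Algebra.algebraMap_eq_smul_one, smul_tmul]
    abel
  rw [← lift_mul_one_tmul_sub_tmul_one_pow, ← lift_mul_one_tmul_sub_tmul_one_pow, h]

end TensorSquare

section IteratedDeriv

variable {𝕜 : Type*} [NontriviallyNormedField 𝕜] {h u : 𝕜 → 𝕜} {m r : ℕ} {x : 𝕜}

theorem deriv_mul_pow_succ (hh : Differentiable 𝕜 h) (hu : Differentiable 𝕜 u) :
    deriv (fun t => h t * u t ^ (r + 1)) =
      fun t => deriv h t * u t ^ (r + 1) + (r + 1) * (h t * deriv u t * u t ^ r) := by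
  funext t
  rw [deriv_fun_mul (hh t) ((hu t).fun_pow _), deriv_fun_pow (hu t)]
  push_cast
  ring

theorem iteratedDeriv_mul_pow_eq_zero (hh : ContDiff 𝕜 m h) (hu : ContDiff 𝕜 m u)
    (hux : u x = 0) (hmr : m < r) : iteratedDeriv m (fun t => h t * u t ^ r) x = 0 := by
  induction m generalizing h r with
  | zero =>
    obtain ⟨r, rfl⟩ := Nat.exists_eq_add_of_lt hmr
    simp [hux]
  | succ m ih =>
    obtain ⟨r, rfl⟩ := Nat.exists_eq_add_of_lt hmr
    push_cast at hh hu
    have hh' := hh.of_succ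
    have hu' := hu.of_succ
    have hdh := hh.deriv'
    have hdu := hu.deriv'
    rw [iteratedDeriv_succ', deriv_mul_pow_succ (hh.differentiable (by simp))
      (hu.differentiable (by simp)), iteratedDeriv_fun_add, iteratedDeriv_const_mul,
      ih hdh hu' (by omega), ih (hh'.mul hdu) hu' (by omega)]
    · simp
    all_goals fun_prop

theorem iteratedDeriv_mul_pow_self (hh : ContDiff 𝕜 m h) (hu : ContDiff 𝕜 m u) (hux : u x = 0) :
    iteratedDeriv m (fun t => h t * u t ^ m) x = m.factorial * h x * deriv u x ^ m := by
  induction m generalizing h with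
  | zero => simp
  | succ m ih =>
    push_cast at hh hu
    have hh' := hh.of_succ
    have hu' := hu.of_succ
    have hdh := hh.deriv'
    have hdu := hu.deriv'
    rw [iteratedDeriv_succ', deriv_mul_pow_succ (hh.differentiable (by simp))
      (hu.differentiable (by simp)), iteratedDeriv_fun_add, iteratedDeriv_const_mul,
      iteratedDeriv_mul_pow_eq_zero hdh hu' hux (by omega), ih (hh'.mul hdu) hu']
    · simp [Nat.factorial_succ]
      ring
    all_goals fun_prop

end IteratedDeriv

section PolynomialComp

variable {𝕜 : Type*} [NontriviallyNormedField 𝕜]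

theorem Polynomial.contDiff_eval_comp {n : WithTop ℕ∞} {g : 𝕜 → 𝕜} (hg : ContDiff 𝕜 n g)
    (P : 𝕜[X]) : ContDiff 𝕜 n (fun t => P.eval (g t)) := by
  simpa [Function.comp_def, coe_aeval_eq_eval] using (P.contDiff_aeval (𝕜 := 𝕜) n).comp hg

noncomputable def iteratedDerivMulComp (m : ℕ) (h g : 𝕜 → 𝕜) (x : 𝕜) (hh : ContDiff 𝕜 m h)
    (hg : ContDiff 𝕜 m g) : 𝕜[X] →ₗ[𝕜] 𝕜 where
  toFun P := iteratedDeriv m (fun t => h t * P.eval (g t)) x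
  map_add' P Q := by
    simp only [eval_add, mul_add]
    exact iteratedDeriv_fun_add (hh.mul (P.contDiff_eval_comp hg)).contDiffAt
      (hh.mul (Q.contDiff_eval_comp hg)).contDiffAt
  map_smul' c P := by
    simp only [eval_smul, smul_eq_mul, mul_left_comm _ c, RingHom.id_apply]
    exact iteratedDeriv_const_mul c (hh.mul (P.contDiff_eval_comp hg)).contDiffAt

theorem iteratedDerivMulComp_apply (m : ℕ) (h g : 𝕜 → 𝕜) (x : 𝕜) (hh : ContDiff 𝕜 m h)
    (hg : ContDiff 𝕜 m g) (P : 𝕜[X]) :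
    iteratedDerivMulComp m h g x hh hg P = iteratedDeriv m (fun t => h t * P.eval (g t)) x :=
  rfl

end PolynomialComp

theorem stmt_14 (n : ℕ) (f g : ℝ → ℝ)
    (hf : ContDiff ℝ (n : ℕ∞) f) (hg : ContDiff ℝ (n : ℕ∞) g)
    (p : ℕ) (hp : p ≤ n) (x : ℝ) :
    ∑ k ∈ Finset.range (n + 1),
      (-1 : ℝ) ^ k * (n.choose k : ℝ) *
        iteratedDeriv p (fun t => (g t) ^ k) x *
        iteratedDeriv (n - p) (fun t => f t * (g t) ^ (n - k)) x
      = (-1 : ℝ) ^ p * (n.factorial : ℝ) * f x * (deriv g x) ^ n := by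
  have hnp : ((n - p : ℕ) : WithTop ℕ∞) ≤ (n : ℕ∞) :=
    WithTop.coe_le_coe.2 (Nat.cast_le.2 (Nat.sub_le n p))
  have hf' : ContDiff ℝ (n - p : ℕ) f := hf.of_le hnp
  have hgnp : ContDiff ℝ (n - p : ℕ) g := hg.of_le hnp
  have hgp : ContDiff ℝ p g := hg.of_le (by exact_mod_cast hp)
  set L := iteratedDerivMulComp p (fun _ => 1) g x contDiff_const hgp
  set M := iteratedDerivMulComp (n - p) f g x hf' hgnp
  have hu : ∀ {m : ℕ}, ContDiff ℝ m g → ContDiff ℝ m (fun t => g t - g x) :=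
    fun h => h.sub contDiff_const
  have hux : g x - g x = 0 := sub_self _
  calc _ = ∑ k ∈ range (n + 1), (-1 : ℝ) ^ k * n.choose k * L (X ^ k) * M (X ^ (n - k)) := by
        simp [L, M, iteratedDerivMulComp_apply]
    _ = ∑ k ∈ range (n + 1), (-1 : ℝ) ^ k * n.choose k * L ((X - C (g x)) ^ k) *
          M ((X - C (g x)) ^ (n - k)) :=
        sum_neg_one_pow_choose_mul_map_pow_mul_map_pow_sub_algebraMap L M X X (g x) n
    _ = (-1 : ℝ) ^ p * n.choose p * L ((X - C (g x)) ^ p) * M ((X - C (g x)) ^ (n - p)) := by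
        refine sum_eq_single_of_mem p (mem_range.2 (by omega)) fun q _ hqp => ?_
        simp only [L, M, iteratedDerivMulComp_apply, eval_pow, eval_sub, eval_X, eval_C]
        rcases hqp.lt_or_gt with hqp | hqp
        · rw [iteratedDeriv_mul_pow_eq_zero hf' (hu hgnp) hux (by omega), mul_zero]
        · rw [iteratedDeriv_mul_pow_eq_zero contDiff_const (hu hgp) hux hqp, mul_zero, zero_mul]
    _ = _ := by
        simp only [L, M, iteratedDerivMulComp_apply, eval_pow, eval_sub, eval_X, eval_C]
        rw [iteratedDeriv_mul_pow_self contDiff_const (hu hgp) hux,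
          iteratedDeriv_mul_pow_self hf' (hu hgnp) hux, deriv_sub_const,
          ← Nat.choose_mul_factorial_mul_factorial hp, ← pow_mul_pow_sub _ hp]
        push_cast
        ring
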